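/- Theorem (β = 1 favors splitting): let X ⊂ ℝ^N be a finite data set, X_ℓ ⊆ X partitioned into Z, and Y = {Y₁,…,Y_k} a proportional coarsening of Z with positive definite sample covariances Σᵢ. Then for any coarsening Ỹ of Y, E₁(Ỹ) ≥ E₁(Y), where E₁(P) = H(P) + Σ_{P_r∈P} (|P_r|/|X|)·H(N(μ_{P_r},Σ_{P_r})) + H(Z|P). -/

import Mathlib

open Matrix

noncomputable def sampleMean {N : ℕ} (S : Finset (Fin N → ℝ)) : Fin N → ℝ :=
  (S.card : ℝ)⁻¹ • ∑ x ∈ S, x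

noncomputable def sampleCov {N : ℕ} (S : Finset (Fin N → ℝ)) : Matrix (Fin N) (Fin N) ℝ :=
  (S.card : ℝ)⁻¹ • ∑ x ∈ S, vecMulVec (x - sampleMean S) (x - sampleMean S)

/-- Differential entropy of the Gaussian `N(μ, Σ)`. -/
noncomputable def gaussEntropy (N : ℕ) (S : Matrix (Fin N) (Fin N) ℝ) : ℝ :=
  (N : ℝ) / 2 * Real.log (2 * Real.pi * Real.exp 1) + 1 / 2 * Real.log S.det

/-- Entropy of a partition `Y` of a finite set `X`, with empirical probabilities. -/
noncomputable def partEntropy {α : Type*} (X : Finset α) {k : ℕ} (Y : Fin k → Finset α) : ℝ :=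
  -∑ i, ((Y i).card : ℝ) / X.card * Real.log (((Y i).card : ℝ) / X.card)

/-- Conditional entropy `H(Z|Y) = Σᵢ (|Yᵢ|/|X|)·H(Z | Yᵢ ∩ X_ℓ)`. -/
noncomputable def condEntropy {α : Type*} [DecidableEq α] (X Xl : Finset α)
    {k m : ℕ} (Y : Fin k → Finset α) (Z : Fin m → Finset α) : ℝ :=
  ∑ i, ((Y i).card : ℝ) / X.card *
    (-∑ j, ((Y i ∩ Z j).card : ℝ) / ((Y i ∩ Xl).card) *
        Real.log (((Y i ∩ Z j).card : ℝ) / ((Y i ∩ Xl).card)))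

/-- The CEC-IB cost `E_β` of a partition `Y` of the data set `X` with
side information `Z` partitioning `Xl ⊆ X`. -/
noncomputable def cecib {N : ℕ} (β : ℝ) (X Xl : Finset (Fin N → ℝ))
    {k m : ℕ} (Y : Fin k → Finset (Fin N → ℝ)) (Z : Fin m → Finset (Fin N → ℝ)) : ℝ :=
  partEntropy X Y + ∑ i, ((Y i).card : ℝ) / X.card * gaussEntropy N (sampleCov (Y i))
    + β * condEntropy X Xl Y Z

/-!
When `Y` is a proportional coarsening of `Z`, the weights `|Yᵢ|/|X|` equal `|Yᵢ ∩ X_ℓ|/|X_ℓ|`,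
so `H(Y) + H(Z|Y)` is the chain-rule expansion of the joint entropy of `(Y, Z)` on `X_ℓ`; as each
`Z_j` lies in a single cluster, that joint entropy is just `H(Z)`. Merging clusters keeps both
properties, so this part of `E₁` is the same for `Y` and `Ỹ`.

For the Gaussian part, the scatter matrix of a disjoint union of clusters is the sum of their
scatter matrices plus the positive semidefinite scatter of the cluster means. Concavity of
`log det`, in the form of its tangent-line bound `log det B ≤ log det C + tr (C⁻¹ B) - n`, then
gives `Σᵢ |Yᵢ| log det Σᵢ ≤ |⋃ Yᵢ| log det Σ_{⋃ Yᵢ}`.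
-/

namespace Matrix

variable {n : Type*}

lemma posDef_sum_smul {ι : Type*} {s : Finset ι} {w : ι → ℝ} {A : ι → Matrix n n ℝ}
    (hw : ∀ i ∈ s, 0 ≤ w i) (hpos : 0 < ∑ i ∈ s, w i) (hA : ∀ i ∈ s, (A i).PosDef) :
    (∑ i ∈ s, w i • A i).PosDef := by
  classical
  obtain ⟨i₀, hi₀, hwi₀⟩ :=
    Finset.exists_lt_of_sum_lt (s := s) (f := fun _ => (0 : ℝ)) (by simpa using hpos)
  rw [← Finset.add_sum_erase s _ hi₀]
  exact ((hA i₀ hi₀).smul hwi₀).add_posSemidef <| posSemidef_sum _ fun i hi =>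
    (hA i (Finset.mem_of_mem_erase hi)).posSemidef.smul (hw i (Finset.mem_of_mem_erase hi))

variable [Fintype n] [DecidableEq n]

open scoped MatrixOrder in
lemma PosSemidef.trace_mul_nonneg {A B : Matrix n n ℝ} (hA : A.PosSemidef) (hB : B.PosSemidef) :
    0 ≤ (A * B).trace := by
  obtain ⟨S, rfl⟩ := CStarAlgebra.nonneg_iff_eq_star_mul_self.mp hA.nonneg
  rw [star_eq_conjTranspose, Matrix.mul_assoc, trace_mul_comm]
  exact (hB.mul_mul_conjTranspose_same S).trace_nonneg

lemma PosDef.log_det_le_trace_sub_card {M : Matrix n n ℝ} (hM : M.PosDef) :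
    Real.log M.det ≤ M.trace - Fintype.card n := by
  have hpos := hM.eigenvalues_pos
  rw [hM.1.det_eq_prod_eigenvalues, hM.1.trace_eq_sum_eigenvalues]
  simp only [RCLike.ofReal_real_eq_id, id_eq]
  rw [Real.log_prod fun i _ => (hpos i).ne', ← Finset.card_univ, ← nsmul_one, ← Finset.sum_const,
    ← Finset.sum_sub_distrib]
  exact Finset.sum_le_sum fun i _ => Real.log_le_sub_one_of_pos (hpos i)

open scoped MatrixOrder in
lemma PosDef.log_det_le_log_det_add_trace_inv_mul {B C : Matrix n n ℝ} (hB : B.PosDef)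
    (hC : C.PosDef) : Real.log B.det ≤ Real.log C.det + (C⁻¹ * B).trace - Fintype.card n := by
  -- writing `C = Sᴴ * S`, the congruence `B ↦ S⁻¹ᴴ * B * S⁻¹` reduces this to the case `C = 1`
  obtain ⟨S, rfl⟩ := CStarAlgebra.nonneg_iff_eq_star_mul_self.mp hC.posSemidef.nonneg
  rw [star_eq_conjTranspose] at hC ⊢
  have hdetC : (Sᴴ * S).det = S.det * S.det := by simp
  have hS : S.det ≠ 0 := fun h => hC.det_pos.ne' (by rw [hdetC, h, zero_mul])
  have hM : (S⁻¹ᴴ * B * S⁻¹).PosDef := hB.conjTranspose_mul_mul_same <|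
    mulVec_injective_iff_isUnit.mpr ((isUnit_iff_isUnit_det _).mpr
      (isUnit_nonsing_inv_det S hS.isUnit))
  have hdetM : (S⁻¹ᴴ * B * S⁻¹).det = B.det / (Sᴴ * S).det := by
    rw [hdetC, det_mul, det_mul, det_conjTranspose, det_nonsing_inv, Ring.inverse_eq_inv']
    simp only [star_trivial]
    field_simp
  have htrM : (S⁻¹ᴴ * B * S⁻¹).trace = ((Sᴴ * S)⁻¹ * B).trace := by
    rw [trace_mul_cycle, mul_inv_rev, conjTranspose_nonsing_inv]
  have := hM.log_det_le_trace_sub_card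
  rw [hdetM, htrM, Real.log_div hB.det_pos.ne' hC.det_pos.ne'] at this
  linarith

lemma sum_mul_log_det_le {ι : Type*} {s : Finset ι} {w : ι → ℝ} {A : ι → Matrix n n ℝ}
    {C : Matrix n n ℝ} (hw : ∀ i ∈ s, 0 ≤ w i) (hA : ∀ i ∈ s, (A i).PosDef)
    (hC : ((∑ i ∈ s, w i) • C - ∑ i ∈ s, w i • A i).PosSemidef) :
    ∑ i ∈ s, w i * Real.log (A i).det ≤ (∑ i ∈ s, w i) * Real.log C.det := by
  rcases (Finset.sum_nonneg hw).eq_or_lt with hW | hW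
  · have hw0 := (Finset.sum_eq_zero_iff_of_nonneg hw).mp hW.symm
    rw [← hW, zero_mul]
    exact (Finset.sum_eq_zero fun i hi => by rw [hw0 i hi, zero_mul]).le
  set W := ∑ i ∈ s, w i
  set G := W • C - ∑ i ∈ s, w i • A i
  have hWC : (W • C).PosDef := by
    rw [← sub_add_cancel (W • C) (∑ i ∈ s, w i • A i)]
    exact (posDef_sum_smul hw hW hA).posSemidef_add hC
  have hCpd : C.PosDef := by
    simpa [smul_smul, inv_mul_cancel₀ hW.ne'] using hWC.smul (inv_pos.mpr hW)
  have htrace : ∑ i ∈ s, w i * (C⁻¹ * A i).trace = W * Fintype.card n - (C⁻¹ * G).trace := by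
    have hCC : C⁻¹ * C = 1 := nonsing_inv_mul C (isUnit_iff_ne_zero.mpr hCpd.det_pos.ne')
    simp only [G, Matrix.mul_sub, Matrix.mul_smul, hCC, Matrix.mul_sum, trace_sub, trace_smul,
      trace_sum, trace_one, smul_eq_mul, Fintype.card]
    ring
  calc ∑ i ∈ s, w i * Real.log (A i).det
      ≤ ∑ i ∈ s, w i * (Real.log C.det + (C⁻¹ * A i).trace - Fintype.card n) :=
        Finset.sum_le_sum fun i hi => mul_le_mul_of_nonneg_left
          ((hA i hi).log_det_le_log_det_add_trace_inv_mul hCpd) (hw i hi)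
    _ = W * Real.log C.det - (C⁻¹ * G).trace := by
        simp only [mul_sub, mul_add, Finset.sum_sub_distrib, Finset.sum_add_distrib, htrace,
          ← Finset.sum_mul]
        ring
    _ ≤ W * Real.log C.det := sub_le_self _ (hCpd.inv.posSemidef.trace_mul_nonneg hC)

end Matrix

section Entropy

open Real

lemma sum_negMulLog_eq_negMulLog_sum_add {ι : Type*} {s : Finset ι} {c : ι → ℝ}
    (hc : ∀ j ∈ s, 0 ≤ c j) :
    ∑ j ∈ s, negMulLog (c j)
      = negMulLog (∑ j ∈ s, c j) + (∑ j ∈ s, c j) * ∑ j ∈ s, negMulLog (c j / ∑ j ∈ s, c j) := by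
  set a := ∑ j ∈ s, c j
  rcases eq_or_ne a 0 with ha | ha
  · have hc0 := (Finset.sum_eq_zero_iff_of_nonneg hc).mp ha
    rw [ha, negMulLog_zero, zero_mul, add_zero]
    exact Finset.sum_eq_zero fun j hj => by rw [hc0 j hj, negMulLog_zero]
  have hsplit : ∀ j, negMulLog (c j) = a * negMulLog (c j / a) + c j / a * negMulLog a :=
    fun j => by rw [← negMulLog_mul, div_mul_cancel₀ _ ha]
  rw [Finset.sum_congr rfl fun j _ => hsplit j, Finset.sum_add_distrib, ← Finset.mul_sum,
    ← Finset.sum_mul, ← Finset.sum_div, div_self ha, one_mul, add_comm]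

variable {α : Type*} {X Xl : Finset α} {k m : ℕ}

lemma partEntropy_eq_sum_negMulLog (X : Finset α) (Y : Fin k → Finset α) :
    partEntropy X Y = ∑ i, negMulLog ((Y i).card / X.card) := by
  simp only [partEntropy, negMulLog, neg_mul, Finset.sum_neg_distrib]

variable [DecidableEq α]

lemma condEntropy_eq_sum_mul_sum_negMulLog (Y : Fin k → Finset α) (Z : Fin m → Finset α) :
    condEntropy X Xl Y Z
      = ∑ i, (Y i).card / X.card * ∑ j, negMulLog ((Y i ∩ Z j).card / (Y i ∩ Xl).card) := by
  simp only [condEntropy, negMulLog, neg_mul, Finset.sum_neg_distrib]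

lemma partEntropy_add_condEntropy_eq_partEntropy (hXl : Xl.Nonempty)
    {Y : Fin k → Finset α} {Z : Fin m → Finset α}
    (hYd : ∀ i i', i ≠ i' → Disjoint (Y i) (Y i'))
    (hZd : ∀ j j', j ≠ j' → Disjoint (Z j) (Z j'))
    (hZu : Finset.univ.biUnion Z = Xl)
    (hcoarse : ∀ j, ∃ i, Z j ⊆ Y i)
    (hprop : ∀ i, ((Y i).card : ℝ) / X.card = ((Y i ∩ Xl).card : ℝ) / Xl.card) :
    partEntropy X Y + condEntropy X Xl Y Z = partEntropy Xl Z := by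
  set p : Fin k → Fin m → ℝ := fun i j => (Y i ∩ Z j).card / Xl.card
  have hrow : ∀ i, ∑ j, p i j = (Y i).card / X.card := fun i => by
    rw [hprop, ← Finset.sum_div, ← hZu, Finset.inter_biUnion, Finset.card_biUnion
      fun j _ j' _ h => (hZd j j' h).mono Finset.inter_subset_right Finset.inter_subset_right]
    push_cast; rfl
  have hcond : ∀ i j, ((Y i ∩ Z j).card : ℝ) / (Y i ∩ Xl).card = p i j / ∑ j, p i j :=
    fun i j => by
      rw [hrow, hprop, div_div_div_cancel_right₀ (Nat.cast_ne_zero.mpr hXl.card_ne_zero)]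
  have hcol : ∀ j, ∑ i, negMulLog (p i j) = negMulLog ((Z j).card / Xl.card) := fun j => by
    obtain ⟨i₀, hi₀⟩ := hcoarse j
    rw [Finset.sum_eq_single i₀ (fun i _ hi => ?_) (by simp)]
    · simp only [p, Finset.inter_eq_right.mpr hi₀]
    · simp [p, Finset.disjoint_iff_inter_eq_empty.mp ((hYd i i₀ hi).mono_right hi₀)]
  rw [partEntropy_eq_sum_negMulLog, condEntropy_eq_sum_mul_sum_negMulLog,
    partEntropy_eq_sum_negMulLog, ← Finset.sum_add_distrib]
  calc _ = ∑ i, ∑ j, negMulLog (p i j) := Finset.sum_congr rfl fun i _ => by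
        rw [sum_negMulLog_eq_negMulLog_sum_add (c := p i) fun j _ => by positivity, hrow]
        simp only [hcond, hrow]
    _ = _ := by rw [Finset.sum_comm]; exact Finset.sum_congr rfl fun j _ => hcol j

lemma card_biUnion_div_card_eq {α ι : Type*} [DecidableEq α] {X Xl : Finset α} {A : Finset ι}
    {Y : ι → Finset α} (hd : (A : Set ι).PairwiseDisjoint Y)
    (hprop : ∀ i ∈ A, ((Y i).card : ℝ) / X.card = ((Y i ∩ Xl).card : ℝ) / Xl.card) :
    ((A.biUnion Y).card : ℝ) / X.card = ((A.biUnion Y ∩ Xl).card : ℝ) / Xl.card := by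
  rw [Finset.biUnion_inter, Finset.card_biUnion hd,
    Finset.card_biUnion (hd.mono fun i => Finset.inter_subset_left)]
  push_cast
  simp only [Finset.sum_div]
  exact Finset.sum_congr rfl hprop

end Entropy

section SampleCovariance

variable {N : ℕ}

lemma sum_sub_sampleMean (S : Finset (Fin N → ℝ)) : ∑ x ∈ S, (x - sampleMean S) = 0 := by
  rcases S.eq_empty_or_nonempty with rfl | hS
  · simp
  rw [Finset.sum_sub_distrib, Finset.sum_const, sampleMean, ← Nat.cast_smul_eq_nsmul ℝ,
    smul_smul, mul_inv_cancel₀ (by exact_mod_cast hS.card_ne_zero), one_smul, sub_self]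

lemma card_smul_sampleCov (S : Finset (Fin N → ℝ)) :
    (S.card : ℝ) • sampleCov S = ∑ x ∈ S, vecMulVec (x - sampleMean S) (x - sampleMean S) := by
  rcases S.eq_empty_or_nonempty with rfl | hS
  · simp
  rw [sampleCov, smul_smul, mul_inv_cancel₀ (by exact_mod_cast hS.card_ne_zero), one_smul]

lemma sum_vecMulVec_sub_eq_card_smul (S : Finset (Fin N → ℝ)) (μ : Fin N → ℝ) :
    ∑ x ∈ S, vecMulVec (x - μ) (x - μ) = (S.card : ℝ) • (sampleCov S
      + vecMulVec (sampleMean S - μ) (sampleMean S - μ)) := by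
  set m := sampleMean S
  have hcentred : ∀ i, ∑ x ∈ S, (x i - m i) = 0 := fun i => by
    simpa using congrFun (sum_sub_sampleMean S) i
  rw [smul_add, card_smul_sampleCov]
  ext i j
  have hsplit : ∀ x : Fin N → ℝ, (x i - μ i) * (x j - μ j) = (x i - m i) * (x j - m j)
      + (m j - μ j) * (x i - m i) + (m i - μ i) * (x j - m j) + (m i - μ i) * (m j - μ j) :=
    fun x => by ring
  simp only [Matrix.sum_apply, vecMulVec_apply, Matrix.add_apply, Matrix.smul_apply, Pi.sub_apply,
    smul_eq_mul]
  rw [Finset.sum_congr rfl fun x _ => hsplit x]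
  simp only [Finset.sum_add_distrib, ← Finset.mul_sum, hcentred, Finset.sum_const, nsmul_eq_mul]
  ring

lemma card_smul_sampleCov_biUnion {ι : Type*} {A : Finset ι} {Y : ι → Finset (Fin N → ℝ)}
    (hd : (A : Set ι).PairwiseDisjoint Y) :
    ((A.biUnion Y).card : ℝ) • sampleCov (A.biUnion Y) = ∑ i ∈ A, ((Y i).card : ℝ) •
      (sampleCov (Y i) + vecMulVec (sampleMean (Y i) - sampleMean (A.biUnion Y))
        (sampleMean (Y i) - sampleMean (A.biUnion Y))) := by
  rw [card_smul_sampleCov, Finset.sum_biUnion hd]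
  exact Finset.sum_congr rfl fun i _ => sum_vecMulVec_sub_eq_card_smul _ _

lemma sum_card_mul_gaussEntropy_le {ι : Type*} {A : Finset ι} {Y : ι → Finset (Fin N → ℝ)}
    (hd : (A : Set ι).PairwiseDisjoint Y) (hpd : ∀ i ∈ A, (sampleCov (Y i)).PosDef) :
    ∑ i ∈ A, ((Y i).card : ℝ) * gaussEntropy N (sampleCov (Y i))
      ≤ ((A.biUnion Y).card : ℝ) * gaussEntropy N (sampleCov (A.biUnion Y)) := by
  have hcard : ((A.biUnion Y).card : ℝ) = ∑ i ∈ A, ((Y i).card : ℝ) := by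
    rw [Finset.card_biUnion hd]; push_cast; rfl
  have hlogdet := Matrix.sum_mul_log_det_le (C := sampleCov (A.biUnion Y))
    (fun i _ => Nat.cast_nonneg ((Y i).card)) hpd <| by
      rw [← hcard, card_smul_sampleCov_biUnion hd, ← Finset.sum_sub_distrib]
      simp only [smul_add, add_sub_cancel_left]
      refine posSemidef_sum _ fun i _ => PosSemidef.smul ?_ (Nat.cast_nonneg (Y i).card)
      exact posSemidef_vecMulVec_self_star _
  rw [hcard]
  simp only [gaussEntropy, mul_add, Finset.sum_add_distrib, ← Finset.sum_mul,
    mul_left_comm _ (1 / 2 : ℝ), ← Finset.mul_sum]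
  gcongr

lemma sum_card_div_mul_gaussEntropy_le_of_merge {ι κ : Type*} [Fintype ι] [Fintype κ]
    [DecidableEq κ] {X : Finset (Fin N → ℝ)} {Y : ι → Finset (Fin N → ℝ)}
    {tY : κ → Finset (Fin N → ℝ)} (g : ι → κ)
    (htY : ∀ r, tY r = (Finset.univ.filter (fun i => g i = r)).biUnion Y)
    (hYd : ∀ i i', i ≠ i' → Disjoint (Y i) (Y i')) (hpd : ∀ i, (sampleCov (Y i)).PosDef) :
    ∑ i, ((Y i).card : ℝ) / X.card * gaussEntropy N (sampleCov (Y i))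
      ≤ ∑ r, ((tY r).card : ℝ) / X.card * gaussEntropy N (sampleCov (tY r)) := by
  simp only [div_mul_eq_mul_div, ← Finset.sum_div]
  gcongr ?_ / _
  rw [← Finset.sum_fiberwise Finset.univ g]
  gcongr with r
  rw [htY]
  exact sum_card_mul_gaussEntropy_le (fun i _ j _ h => hYd i j h) fun i _ => hpd i

end SampleCovariance

theorem beta_one_favors_splitting_general {N : ℕ} (X Xl : Finset (Fin N → ℝ))
    (hXl : Xl.Nonempty)
    {k k' m : ℕ} (Y : Fin k → Finset (Fin N → ℝ)) (tY : Fin k' → Finset (Fin N → ℝ))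
    (Z : Fin m → Finset (Fin N → ℝ))
    (hYd : ∀ i i', i ≠ i' → Disjoint (Y i) (Y i'))
    (hZd : ∀ j j', j ≠ j' → Disjoint (Z j) (Z j'))
    (hZu : Finset.univ.biUnion Z = Xl)
    -- Y is a coarsening of Z: each Z_j is contained in some Y_i
    (hcoarse : ∀ j, ∃ i, Z j ⊆ Y i)
    -- Y is proportional to Z
    (hprop : ∀ i, ((Y i).card : ℝ) / X.card = ((Y i ∩ Xl).card : ℝ) / Xl.card)
    -- the sample covariance matrices of the clusters are positive definite
    (hpd : ∀ i, (sampleCov (Y i)).PosDef)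
    -- tY is a coarsening of Y, via the merging map g
    (g : Fin k → Fin k')
    (htY : ∀ r, tY r = (Finset.univ.filter (fun i => g i = r)).biUnion Y) :
    cecib 1 X Xl tY Z ≥ cecib 1 X Xl Y Z := by
  have htYd : ∀ r r', r ≠ r' → Disjoint (tY r) (tY r') := fun r r' hr => by
    rw [htY, htY]
    refine (Finset.disjoint_biUnion_left _ _ _).2 fun i hi =>
      (Finset.disjoint_biUnion_right _ _ _).2 fun i' hi' => hYd i i' fun h => hr ?_
    simp only [Finset.mem_filter, Finset.mem_univ, true_and] at hi hi'
    rw [← hi, ← hi', h]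
  have htcoarse : ∀ j, ∃ r, Z j ⊆ tY r := fun j => by
    obtain ⟨i, hi⟩ := hcoarse j
    exact ⟨g i, hi.trans (htY (g i) ▸ Finset.subset_biUnion_of_mem Y (by simp))⟩
  have htprop : ∀ r, ((tY r).card : ℝ) / X.card = ((tY r ∩ Xl).card : ℝ) / Xl.card := fun r => by
    rw [htY]
    exact card_biUnion_div_card_eq (fun i _ j _ h => hYd i j h) fun i _ => hprop i
  have hinfo :
      partEntropy X tY + condEntropy X Xl tY Z = partEntropy X Y + condEntropy X Xl Y Z := by
    rw [partEntropy_add_condEntropy_eq_partEntropy hXl htYd hZd hZu htcoarse htprop,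
      partEntropy_add_condEntropy_eq_partEntropy hXl hYd hZd hZu hcoarse hprop]
  have hgauss := sum_card_div_mul_gaussEntropy_le_of_merge (X := X) g htY hYd hpd
  simp only [cecib, one_mul, ge_iff_le]
  linarith

theorem beta_one_favors_splitting {N : ℕ} (X Xl : Finset (Fin N → ℝ))
    (hsub : Xl ⊆ X) (hXl : Xl.Nonempty)
    {k k' m : ℕ} (Y : Fin k → Finset (Fin N → ℝ)) (tY : Fin k' → Finset (Fin N → ℝ))
    (Z : Fin m → Finset (Fin N → ℝ))
    (hYd : ∀ i i', i ≠ i' → Disjoint (Y i) (Y i'))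
    (hYu : Finset.univ.biUnion Y = X)
    (hZd : ∀ j j', j ≠ j' → Disjoint (Z j) (Z j'))
    (hZu : Finset.univ.biUnion Z = Xl)
    -- Y is a coarsening of Z: each Z_j is contained in some Y_i
    (hcoarse : ∀ j, ∃ i, Z j ⊆ Y i)
    -- Y is proportional to Z
    (hprop : ∀ i, ((Y i).card : ℝ) / X.card = ((Y i ∩ Xl).card : ℝ) / Xl.card)
    -- the sample covariance matrices of the clusters are positive definite
    (hpd : ∀ i, (sampleCov (Y i)).PosDef)
    -- tY is a coarsening of Y, via the merging map g
    (g : Fin k → Fin k')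
    (htY : ∀ r, tY r = (Finset.univ.filter (fun i => g i = r)).biUnion Y) :
    cecib 1 X Xl tY Z ≥ cecib 1 X Xl Y Z :=
  beta_one_favors_splitting_general X Xl hXl Y tY Z hYd hZd hZu hcoarse hprop hpd g htY
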